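/- Let (Y, Σ) be a measurable space, Δ(Y) the set of countably additive probability measures on (Y, Σ), and ≽ a preorder on Δ(Y) satisfying rational independence. Let ν, ν' be finite signed measures on (Y, Σ), let α, β be positive rationals, and let p, q, r, s ∈ Δ(Y) satisfy ν − ν' = α(p − q) = β(r − s). If p ≽ q, then it is not the case that s ≻ r. -/

import Mathlib

open MeasureTheory

/-- The strict part of a binary relation: `p ≻ q` iff `p ≽ q` and not `q ≽ p`. -/
def StrictRel {X : Type*} (R : X → X → Prop) (x y : X) : Prop := R x y ∧ ¬ R y x

/-- The mixture `a • p + (1 - a) • r` of two measures. -/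
noncomputable def mix {Y : Type*} [MeasurableSpace Y] (a : NNReal) (p r : Measure Y) :
    Measure Y := a • p + (1 - a) • r

/-- A relation on `Δ(Y)` (here: a relation on measures, considered on probability
measures) satisfies rational independence if for all probability measures `p, q, r` and
every rational `α ∈ (0, 1]`, `p ≽ q ↔ α p + (1-α) r ≽ α q + (1-α) r`. -/
def RatIndep {Y : Type*} [MeasurableSpace Y] (R : Measure Y → Measure Y → Prop) : Prop :=
  ∀ p q r : Measure Y, IsProbabilityMeasure p → IsProbabilityMeasure q →
    IsProbabilityMeasure r → ∀ a : ℚ, 0 < a → a ≤ 1 →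
      (R p q ↔ R (mix (Real.toNNReal (a : ℝ)) p r) (mix (Real.toNNReal (a : ℝ)) q r))

/-- If `ν − ν' = α(p − q) = β(r − s)` with `α, β` positive rationals and `p, q, r, s`
probability measures, and `p ≽ q`, then it is not the case that `s ≻ r`. -/
theorem no_reversal_of_signed_difference {Y : Type*} [MeasurableSpace Y]
    (R : Measure Y → Measure Y → Prop)
    (hrefl : ∀ p : Measure Y, IsProbabilityMeasure p → R p p)
    (htrans : ∀ p q r : Measure Y, IsProbabilityMeasure p → IsProbabilityMeasure q →
      IsProbabilityMeasure r → R p q → R q r → R p r)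
    (hRI : RatIndep R)
    (ν ν' : SignedMeasure Y) (a b : ℚ) (ha : 0 < a) (hb : 0 < b)
    (p q r s : Measure Y) [IsProbabilityMeasure p] [IsProbabilityMeasure q]
    [IsProbabilityMeasure r] [IsProbabilityMeasure s]
    (h1 : ν - ν' = (a : ℝ) • (p.toSignedMeasure - q.toSignedMeasure))
    (h2 : ν - ν' = (b : ℝ) • (r.toSignedMeasure - s.toSignedMeasure))
    (hpq : R p q) :
    ¬ StrictRel R s r := by
  intro ⟨hsr, hns⟩
  apply hns
  have hab : (0:ℚ) < a + b := by linarith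
  set qa : ℚ := a / (a + b) with hqa_def
  set qb : ℚ := b / (a + b) with hqb_def
  have hqa : 0 < qa := div_pos ha hab
  have hqb : 0 < qb := div_pos hb hab
  have hsum : qa + qb = 1 := by rw [hqa_def, hqb_def]; field_simp
  have hqa1 : qa ≤ 1 := by linarith
  have hqb1 : qb ≤ 1 := by linarith
  set A : NNReal := Real.toNNReal (qa : ℝ) with hA_def
  set B : NNReal := Real.toNNReal (qb : ℝ) with hB_def
  have hqaR : (0:ℝ) ≤ (qa:ℝ) := by exact_mod_cast hqa.le
  have hqbR : (0:ℝ) ≤ (qb:ℝ) := by exact_mod_cast hqb.le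
  have hAB : A + B = 1 := by
    rw [hA_def, hB_def, ← Real.toNNReal_add hqaR hqbR]
    have h1' : ((qa:ℝ) + (qb:ℝ)) = 1 := by exact_mod_cast hsum
    rw [h1', Real.toNNReal_one]
  have h1mA : (1:NNReal) - A = B := by rw [← hAB, add_tsub_cancel_left]
  have h1mB : (1:NNReal) - B = A := by rw [← hAB, add_tsub_cancel_right]
  have hAcoe : (A : ℝ) = (qa : ℝ) := Real.coe_toNNReal _ hqaR
  have hBcoe : (B : ℝ) = (qb : ℝ) := Real.coe_toNNReal _ hqbR
  -- signed measure equality, pointwise on measurable sets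
  have hsm := h1.symm.trans h2
  have hkey : mix A p s = mix B r q := by
    ext E hE
    have h := congrArg (fun v : SignedMeasure Y => v E) hsm
    simp only [VectorMeasure.smul_apply, VectorMeasure.sub_apply,
      Measure.toSignedMeasure_apply_measurable hE, smul_eq_mul] at h
    simp only [mix, h1mA, h1mB, Measure.add_apply, Measure.smul_apply, ENNReal.smul_def, smul_eq_mul]
    have hfin : ∀ μ : Measure Y, IsProbabilityMeasure μ → μ E ≠ ⊤ := by
      intro μ _; exact measure_ne_top μ E
    rw [← ENNReal.toReal_eq_toReal_iff' (by finiteness) (by finiteness)]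
    rw [ENNReal.toReal_add (by finiteness) (by finiteness),
        ENNReal.toReal_add (by finiteness) (by finiteness)]
    simp only [ENNReal.toReal_mul, ENNReal.coe_toReal, hAcoe, hBcoe]
    have haR : (0:ℝ) < (a:ℝ) := by exact_mod_cast ha
    have hbR : (0:ℝ) < (b:ℝ) := by exact_mod_cast hb
    have habR : (0:ℝ) < (a:ℝ) + (b:ℝ) := by linarith
    have hqaR' : (qa:ℝ) = (a:ℝ) / ((a:ℝ) + (b:ℝ)) := by push_cast [hqa_def]; ring
    have hqbR' : (qb:ℝ) = (b:ℝ) / ((a:ℝ) + (b:ℝ)) := by push_cast [hqb_def]; ring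
    rw [hqaR', hqbR']
    have hne : ((a:ℝ) + (b:ℝ)) ≠ 0 := ne_of_gt habR
    field_simp
    simp only [measureReal_def] at h
    linear_combination h
  have hcomm : mix A q s = mix B s q := by
    simp only [mix, h1mA, h1mB]
    exact add_comm _ _
  have step := (hRI p q s inferInstance inferInstance inferInstance qa hqa hqa1).mp hpq
  rw [hkey, hcomm] at step
  exact (hRI r s q inferInstance inferInstance inferInstance qb hqb hqb1).mpr step
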